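/- Let w be a word over {a,b} and x a letter such that wx is a trapezoidal word. Then L_{wx} = L_w if wx is closed, and L_{wx} = L_w + 1 if wx is open. -/
import Mathlib


/-- The two-letter alphabet {a, b}. -/
inductive AB : Type
  | a : AB
  | b : AB
deriving DecidableEq, Repr

/-- A (finite) word over {a, b}. -/
abbrev Word := List AB

open AB

/-- `u` occurs in `w` at position `i`. -/
def OccursAt (u w : Word) (i : ℕ) : Prop :=
  i + u.length ≤ w.length ∧ (w.drop i).take u.length = u

/-- `u` occurs exactly once in `w` (is unrepeated in `w`). -/
def OccursOnce (u w : Word) : Prop := ∃! i, OccursAt u w i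

/-- `u` is a right special factor of `w`: both `ua` and `ub` are factors of `w`. -/
def IsRightSpecial (u w : Word) : Prop := (u ++ [a]) <:+: w ∧ (u ++ [b]) <:+: w

/-- `u` is a left special factor of `w`: both `au` and `bu` are factors of `w`. -/
def IsLeftSpecial (u w : Word) : Prop := ([a] ++ u) <:+: w ∧ ([b] ++ u) <:+: w

/-- `K w`: the length of the shortest unrepeated suffix of `w`. -/
noncomputable def Kp (w : Word) : ℕ := sInf {n | ∃ s : Word, s <:+ w ∧ s.length = n ∧ OccursOnce s w}

/-- `H w`: the length of the shortest unrepeated prefix of `w`. -/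
noncomputable def Hp (w : Word) : ℕ := sInf {n | ∃ p : Word, p <+: w ∧ p.length = n ∧ OccursOnce p w}

/-- `R w`: the smallest `n ≥ 0` such that `w` has no right special factor of length `n`. -/
noncomputable def Rp (w : Word) : ℕ := sInf {n | ∀ u : Word, u.length = n → ¬ IsRightSpecial u w}

/-- `L w`: the smallest `n ≥ 0` such that `w` has no left special factor of length `n`. -/
noncomputable def Lp (w : Word) : ℕ := sInf {n | ∀ u : Word, u.length = n → ¬ IsLeftSpecial u w}

/-- A word `w` is trapezoidal if `|w| = K w + R w`. -/
def IsTrapezoidal (w : Word) : Prop := w.length = Kp w + Rp w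

/-- A finite word over `{a,b}` is Sturmian iff it is balanced: there is no word `u`
with both `aua` and `bub` factors of `w`. -/
def IsSturmian (w : Word) : Prop :=
  ¬ ∃ u : Word, ([a] ++ u ++ [a]) <:+: w ∧ ([b] ++ u ++ [b]) <:+: w

/-- A nonempty word is closed if it has a border (a proper prefix which is also a suffix)
whose only occurrences in `w` are as a prefix and as a suffix. -/
def IsClosedWord (w : Word) : Prop :=
  w ≠ [] ∧ ∃ v : Word, v <+: w ∧ v.length < w.length ∧ v <:+ w ∧
    ∀ i : ℕ, OccursAt v w i → i = 0 ∨ i + v.length = w.length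

/-- A nonempty word is open if it is not closed. -/
def IsOpenWord (w : Word) : Prop := w ≠ [] ∧ ¬ IsClosedWord w

/-- Central words: `a^n`, `b^n`, or `u a b v = v b a u`. -/
def IsCentral (w : Word) : Prop :=
  (∃ n : ℕ, w = List.replicate n a) ∨ (∃ n : ℕ, w = List.replicate n b) ∨
  (∃ u v : Word, w = u ++ [a, b] ++ v ∧ w = v ++ [b, a] ++ u)

/-- The minimal period of `w`: `|w|` minus the length of the longest border of `w`. -/
noncomputable def minPeriod (w : Word) : ℕ :=
  w.length - sSup {n | ∃ v : Word, v.length = n ∧ v <+: w ∧ v ≠ w ∧ v <:+ w}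

section AuxProof
open List

attribute [local instance] Classical.propDecidable

namespace LExt

/-! ### Basic occurrence API -/

theorem occursAt_iff {u w : Word} {i : ℕ} :
    OccursAt u w i ↔ ∃ t s : Word, t.length = i ∧ w = t ++ u ++ s := by
  constructor
  · rintro ⟨hle, heq⟩
    refine ⟨w.take i, w.drop (i + u.length), ?_, ?_⟩
    · simp; omega
    · conv_lhs => rw [← List.take_append_drop i w]
      rw [List.append_assoc]
      congr 1
      conv_lhs => rw [← List.take_append_drop u.length (w.drop i)]
      rw [heq, List.drop_drop, Nat.add_comm]
  · rintro ⟨t, s, hlen, rfl⟩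
    constructor
    · simp; omega
    · subst hlen
      rw [List.append_assoc, List.drop_left, List.take_left]

theorem infix_iff_occursAt {u w : Word} : u <:+: w ↔ ∃ i, OccursAt u w i := by
  constructor
  · rintro ⟨t, s, rfl⟩
    exact ⟨t.length, occursAt_iff.mpr ⟨t, s, rfl, rfl⟩⟩
  · rintro ⟨i, h⟩
    rcases occursAt_iff.mp h with ⟨t, s, -, rfl⟩
    exact ⟨t, s, rfl⟩

theorem occursAt_infix {u w : Word} {i : ℕ} (h : OccursAt u w i) : u <:+: w :=
  infix_iff_occursAt.mpr ⟨i, h⟩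

theorem occursAt_zero_iff {u w : Word} : OccursAt u w 0 ↔ u <+: w := by
  rw [occursAt_iff]
  constructor
  · rintro ⟨t, s, hlen, rfl⟩
    rw [List.length_eq_zero_iff] at hlen; subst hlen
    exact ⟨s, by simp⟩
  · rintro ⟨s, rfl⟩
    exact ⟨[], s, rfl, by simp⟩

theorem occursAt_append_left {u w z : Word} {i : ℕ} (h : OccursAt u w i) :
    OccursAt u (w ++ z) i := by
  rcases occursAt_iff.mp h with ⟨t, s, hlen, rfl⟩
  exact occursAt_iff.mpr ⟨t, s ++ z, hlen, by simp⟩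

theorem occursAt_restrict {u w z : Word} {i : ℕ} (h : OccursAt u (w ++ z) i)
    (hle : i + u.length ≤ w.length) : OccursAt u w i := by
  rcases h with ⟨-, heq⟩
  refine ⟨hle, ?_⟩
  rw [List.drop_append_of_le_length (by omega), List.take_append_of_le_length (by simp; omega)] at heq
  exact heq

theorem occursAt_suffix {w : Word} {n : ℕ} (hn : n ≤ w.length) :
    OccursAt (w.drop (w.length - n)) w (w.length - n) := by
  refine ⟨by simp, ?_⟩
  simp

theorem occursAt_take {w : Word} {n : ℕ} : OccursAt (w.take n) w 0 := by
  refine ⟨by simp, ?_⟩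
  simp [List.take_take]

theorem suffix_eq_drop {s w : Word} (h : s <:+ w) : s = w.drop (w.length - s.length) := by
  rcases h with ⟨t, rfl⟩
  simp

theorem prefix_eq_take {p w : Word} (h : p <+: w) : p = w.take p.length :=
  List.prefix_iff_eq_take.mp h

theorem occursAt_suffix_of_end {u w : Word} {i : ℕ} (h : OccursAt u w i)
    (hend : i + u.length = w.length) : u <:+ w := by
  rcases occursAt_iff.mp h with ⟨t, s, hlen, rfl⟩
  have : s.length = 0 := by simp at hend; omega
  rw [List.length_eq_zero_iff] at this; subst this
  exact ⟨t, by simp⟩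

/-- an occurrence of `u ++ [c]` gives an occurrence of `u`. -/
theorem occursAt_of_occursAt_append {u z w : Word} {i : ℕ} (h : OccursAt (u ++ z) w i) :
    OccursAt u w i := by
  rcases occursAt_iff.mp h with ⟨t, s, hlen, rfl⟩
  exact occursAt_iff.mpr ⟨t, z ++ s, hlen, by simp⟩

/-- an occurrence of `c :: u` gives an occurrence of `u` one step later. -/
theorem occursAt_of_occursAt_cons {u w : Word} {c : AB} {i : ℕ}
    (h : OccursAt ([c] ++ u) w i) : OccursAt u w (i + 1) := by
  rcases occursAt_iff.mp h with ⟨t, s, hlen, rfl⟩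
  refine occursAt_iff.mpr ⟨t ++ [c], s, by simp [hlen], by simp⟩

/-- if `u` occurs at `i` with room to spare on the right, `u++[c]` occurs for some `c`. -/
theorem exists_ext_of_occursAt {u w : Word} {i : ℕ} (h : OccursAt u w i)
    (hlt : i + u.length < w.length) : ∃ c : AB, OccursAt (u ++ [c]) w i := by
  rcases occursAt_iff.mp h with ⟨t, s, hlen, rfl⟩
  have hs : s ≠ [] := by
    intro hnil; subst hnil; simp at hlt; omega
  rcases s with - | ⟨c, s'⟩
  · exact absurd rfl hs
  · exact ⟨c, occursAt_iff.mpr ⟨t, s', hlen, by simp⟩⟩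



/-! ### API for `Kp`, `Hp`, `Rp`, `Lp` -/

theorem occursOnce_self (w : Word) : OccursOnce w w := by
  refine ⟨0, occursAt_zero_iff.mpr (List.prefix_refl w), ?_⟩
  rintro j ⟨hle, -⟩
  omega

theorem Kp_set_nonempty (w : Word) :
    {n | ∃ s : Word, s <:+ w ∧ s.length = n ∧ OccursOnce s w}.Nonempty :=
  ⟨w.length, w, List.suffix_refl w, rfl, occursOnce_self w⟩

theorem Kp_mem (w : Word) : ∃ s : Word, s <:+ w ∧ s.length = Kp w ∧ OccursOnce s w :=
  Nat.sInf_mem (Kp_set_nonempty w)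

theorem Kp_le_length (w : Word) : Kp w ≤ w.length :=
  Nat.sInf_le ⟨w, List.suffix_refl w, rfl, occursOnce_self w⟩

theorem Hp_set_nonempty (w : Word) :
    {n | ∃ p : Word, p <+: w ∧ p.length = n ∧ OccursOnce p w}.Nonempty :=
  ⟨w.length, w, List.prefix_refl w, rfl, occursOnce_self w⟩

theorem Hp_mem (w : Word) : ∃ p : Word, p <+: w ∧ p.length = Hp w ∧ OccursOnce p w :=
  Nat.sInf_mem (Hp_set_nonempty w)

theorem Hp_le_length (w : Word) : Hp w ≤ w.length :=
  Nat.sInf_le ⟨w, List.prefix_refl w, rfl, occursOnce_self w⟩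

/-- the suffix of length `n` occurs once iff `Kp w ≤ n` (for `n ≤ |w|`). -/
theorem suffix_once_iff {w : Word} {n : ℕ} (hn : n ≤ w.length) :
    OccursOnce (w.drop (w.length - n)) w ↔ Kp w ≤ n := by
  constructor
  · intro h
    exact Nat.sInf_le ⟨w.drop (w.length - n), List.drop_suffix _ _, by simp; omega, h⟩
  · intro h
    induction n, h using Nat.le_induction with
    | base =>
      rcases Kp_mem w with ⟨s, hs, hlen, honce⟩
      have := suffix_eq_drop hs
      rw [hlen] at this
      rwa [← this]
    | succ m hm ih =>
      have hmw : m ≤ w.length := by omega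
      have honce := ih (by omega)
      set s := w.drop (w.length - m) with hs
      have hk : w.length - (m + 1) < w.length := by omega
      have h1 : w.length - (m + 1) + 1 = w.length - m := by omega
      have hdrop : w.drop (w.length - (m+1)) = [w[w.length - (m+1)]'hk] ++ s := by
        rw [List.drop_eq_getElem_cons hk, h1, hs]
        rfl
      refine ⟨w.length - (m+1), ?_, ?_⟩
      · exact hdrop ▸ occursAt_suffix (show m+1 ≤ w.length by omega)
      · intro j hj
        rw [hdrop] at hj
        have h2 := occursAt_of_occursAt_cons hj
        have : j + 1 = w.length - m := by
          have hu := honce.unique h2 (occursAt_suffix hmw)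
          omega
        omega

/-- the prefix of length `n` occurs once iff `Hp w ≤ n` (for `n ≤ |w|`). -/
theorem prefix_once_iff {w : Word} {n : ℕ} (hn : n ≤ w.length) :
    OccursOnce (w.take n) w ↔ Hp w ≤ n := by
  constructor
  · intro h
    exact Nat.sInf_le ⟨w.take n, List.take_prefix _ _, by simp; omega, h⟩
  · intro h
    induction n, h using Nat.le_induction with
    | base =>
      rcases Hp_mem w with ⟨p, hp, hlen, honce⟩
      have := prefix_eq_take hp
      rw [hlen] at this
      rwa [← this]
    | succ m hm ih =>
      have hmw : m ≤ w.length := by omega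
      have honce := ih (by omega)
      have htake : w.take (m+1) = w.take m ++ [w[m]] := by
        rw [List.take_succ]
        congr 1
        simp [List.getElem?_eq_getElem (show m < w.length by omega)]
      refine ⟨0, by simpa using occursAt_take, ?_⟩
      intro j hj
      rw [htake] at hj
      have h2 := occursAt_of_occursAt_append hj
      exact honce.unique h2 occursAt_take

/-- right special factors: if none of length `n`, none of length `n+1`. -/
theorem rs_mono {w : Word} {n : ℕ} (h : ∀ u : Word, u.length = n → ¬ IsRightSpecial u w) :
    ∀ u : Word, u.length = n + 1 → ¬ IsRightSpecial u w := by
  rintro u hlen ⟨ha, hb⟩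
  rcases u with - | ⟨c, u'⟩
  · simp at hlen
  · exact h u' (by simpa using hlen) ⟨
      ((List.suffix_cons c (u' ++ [a])).isInfix.trans (by simpa using ha)),
      ((List.suffix_cons c (u' ++ [b])).isInfix.trans (by simpa using hb))⟩

/-- left special factors: if none of length `n`, none of length `n+1`. -/
theorem ls_mono {w : Word} {n : ℕ} (h : ∀ u : Word, u.length = n → ¬ IsLeftSpecial u w) :
    ∀ u : Word, u.length = n + 1 → ¬ IsLeftSpecial u w := by
  rintro u hlen ⟨ha, hb⟩
  have hu : u ≠ [] := by intro h'; subst h'; simp at hlen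
  have hdec : u = u.dropLast ++ [u.getLast hu] := (List.dropLast_append_getLast hu).symm
  refine h u.dropLast (by rw [List.length_dropLast]; omega) ⟨?_, ?_⟩
  · refine List.IsInfix.trans ?_ ha
    exact (show ([a] ++ u.dropLast) <+: ([a] ++ u) from
      ⟨[u.getLast hu], by rw [List.append_assoc, List.dropLast_append_getLast hu]⟩).isInfix
  · refine List.IsInfix.trans ?_ hb
    exact (show ([b] ++ u.dropLast) <+: ([b] ++ u) from
      ⟨[u.getLast hu], by rw [List.append_assoc, List.dropLast_append_getLast hu]⟩).isInfix

theorem Rp_set_nonempty (w : Word) :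
    {n | ∀ u : Word, u.length = n → ¬ IsRightSpecial u w}.Nonempty := by
  refine ⟨w.length, ?_⟩
  rintro u hlen ⟨ha, -⟩
  have := ha.length_le
  simp at this; omega

theorem Lp_set_nonempty (w : Word) :
    {n | ∀ u : Word, u.length = n → ¬ IsLeftSpecial u w}.Nonempty := by
  refine ⟨w.length, ?_⟩
  rintro u hlen ⟨ha, -⟩
  have := ha.length_le
  simp at this; omega

theorem Rp_le_length (w : Word) : Rp w ≤ w.length := by
  refine Nat.sInf_le ?_
  rintro u hlen ⟨ha, -⟩
  have := ha.length_le
  simp at this; omega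

theorem Lp_le_length (w : Word) : Lp w ≤ w.length := by
  refine Nat.sInf_le ?_
  rintro u hlen ⟨ha, -⟩
  have := ha.length_le
  simp at this; omega

theorem Rp_le_iff {w : Word} {n : ℕ} :
    Rp w ≤ n ↔ ∀ u : Word, u.length = n → ¬ IsRightSpecial u w := by
  constructor
  · intro h
    have hmem := Nat.sInf_mem (Rp_set_nonempty w)
    induction n, h using Nat.le_induction with
    | base => exact hmem
    | succ m hm ih => exact rs_mono ih
  · exact fun h => Nat.sInf_le h

theorem Lp_le_iff {w : Word} {n : ℕ} :
    Lp w ≤ n ↔ ∀ u : Word, u.length = n → ¬ IsLeftSpecial u w := by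
  constructor
  · intro h
    have hmem := Nat.sInf_mem (Lp_set_nonempty w)
    induction n, h using Nat.le_induction with
    | base => exact hmem
    | succ m hm ih => exact ls_mono ih
  · exact fun h => Nat.sInf_le h

theorem exists_rs_of_lt {w : Word} {n : ℕ} (h : n < Rp w) :
    ∃ u : Word, u.length = n ∧ IsRightSpecial u w := by
  have := mt Rp_le_iff.mpr (by omega : ¬ Rp w ≤ n)
  push_neg at this
  rcases this with ⟨u, hlen, hrs⟩
  exact ⟨u, hlen, hrs⟩

theorem exists_ls_of_lt {w : Word} {n : ℕ} (h : n < Lp w) :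
    ∃ u : Word, u.length = n ∧ IsLeftSpecial u w := by
  have := mt Lp_le_iff.mpr (by omega : ¬ Lp w ≤ n)
  push_neg at this
  rcases this with ⟨u, hlen, hls⟩
  exact ⟨u, hlen, hls⟩

/-! ### Counting layer -/

instance : Fintype AB := ⟨⟨{AB.a, AB.b}, by decide⟩, fun x => by cases x <;> decide⟩

/-- the finset of factors of `w` of length `n`. -/
noncomputable def FactF (w : Word) (n : ℕ) : Finset Word :=
  Finset.image (fun i => (w.drop i).take n) (Finset.range (w.length + 1 - n))

theorem mem_FactF {w u : Word} {n : ℕ} :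
    u ∈ FactF w n ↔ n ≤ w.length ∧ u.length = n ∧ u <:+: w := by
  constructor
  · intro hu
    rcases Finset.mem_image.mp hu with ⟨i, hi, rfl⟩
    rw [Finset.mem_range] at hi
    refine ⟨by omega, by simp; omega, ?_⟩
    exact ((List.take_prefix _ _).isInfix).trans (List.drop_suffix i w).isInfix
  · rintro ⟨hn, hlen, hinf⟩
    rcases infix_iff_occursAt.mp hinf with ⟨i, hocc⟩
    rcases hocc with ⟨hle, heq⟩
    refine Finset.mem_image.mpr ⟨i, Finset.mem_range.mpr (by omega), ?_⟩
    rw [← hlen]; exact heq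

theorem FactF_zero (w : Word) : FactF w 0 = {([] : Word)} := by
  ext u
  simp only [mem_FactF, Finset.mem_singleton]
  constructor
  · rintro ⟨-, hlen, -⟩
    exact List.length_eq_zero_iff.mp hlen
  · rintro rfl
    exact ⟨Nat.zero_le _, rfl, List.nil_infix⟩

theorem FactF_overlong (w : Word) {n : ℕ} (h : w.length < n) : FactF w n = ∅ := by
  ext u
  simp [mem_FactF]
  intro h1; omega

/-- right extensions of `u` inside `w`. -/
noncomputable def ExtF (w u : Word) : Finset AB :=
  Finset.univ.filter (fun c => (u ++ [c]) <:+: w)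

theorem mem_ExtF {w u : Word} {c : AB} : c ∈ ExtF w u ↔ (u ++ [c]) <:+: w := by
  simp [ExtF]

/-- a factor with no right extension is the unrepeated suffix. -/
theorem no_ext_iff {w u : Word} (hu : u <:+: w) :
    (∀ c : AB, ¬ (u ++ [c]) <:+: w) ↔ (u <:+ w ∧ OccursOnce u w) := by
  constructor
  · intro h
    rcases infix_iff_occursAt.mp hu with ⟨i, hi⟩
    have hall : ∀ j, OccursAt u w j → j + u.length = w.length := by
      intro j hj
      by_contra hne
      have hlt : j + u.length < w.length := by rcases hj with ⟨h1, -⟩; omega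
      rcases exists_ext_of_occursAt hj hlt with ⟨c, hc⟩
      exact h c (occursAt_infix hc)
    refine ⟨occursAt_suffix_of_end hi (hall i hi), i, hi, ?_⟩
    intro j hj
    have := hall j hj
    have := hall i hi
    omega
  · rintro ⟨hsuf, honce⟩ c hc
    rcases infix_iff_occursAt.mp hc with ⟨j, hj⟩
    have hj' := occursAt_of_occursAt_append hj
    have hsufocc : OccursAt u w (w.length - u.length) := by
      have := occursAt_suffix (show u.length ≤ w.length from hsuf.length_le)
      rwa [← suffix_eq_drop hsuf] at this
    have h1 := honce.unique hj' hsufocc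
    rcases hj with ⟨hlen, -⟩
    simp at hlen
    omega

theorem ext_card {w u : Word} (hu : u <:+: w) :
    (ExtF w u).card + (if (u <:+ w ∧ OccursOnce u w) then 1 else 0)
      = 1 + (if IsRightSpecial u w then 1 else 0) := by
  by_cases hrs : IsRightSpecial u w
  · have hdead : ¬ (u <:+ w ∧ OccursOnce u w) := by
      intro hd
      exact ((no_ext_iff hu).mpr hd) a hrs.1
    have : ExtF w u = Finset.univ := by
      apply Finset.eq_univ_of_forall
      intro c
      cases c
      · exact mem_ExtF.mpr hrs.1
      · exact mem_ExtF.mpr hrs.2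
    rw [this, if_neg hdead, if_pos hrs]
    rfl
  · by_cases hdead : (u <:+ w ∧ OccursOnce u w)
    · have : ExtF w u = ∅ := by
        apply Finset.eq_empty_of_forall_notMem
        intro c hc
        exact ((no_ext_iff hu).mpr hdead) c (mem_ExtF.mp hc)
      rw [this, if_pos hdead, if_neg hrs]
      simp
    · have hex : ∃ c : AB, (u ++ [c]) <:+: w := by
        by_contra h
        push_neg at h
        exact hdead ((no_ext_iff hu).mp h)
      rcases hex with ⟨c, hc⟩
      have hcard : (ExtF w u).card = 1 := by
        rcases c with - | -
        · have hb : ¬ (u ++ [b]) <:+: w := fun h => hrs ⟨hc, h⟩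
          have : ExtF w u = {a} := by
            ext d
            rcases d with - | -
            · simp [mem_ExtF, hc]
            · simp [mem_ExtF, hb]
          rw [this]; rfl
        · have hb : ¬ (u ++ [a]) <:+: w := fun h => hrs ⟨h, hc⟩
          have : ExtF w u = {b} := by
            ext d
            rcases d with - | -
            · simp [mem_ExtF, hb]
            · simp [mem_ExtF, hc]
          rw [this]; rfl
      rw [hcard, if_neg hdead, if_neg hrs]

theorem factF_succ (w : Word) (n : ℕ) :
    FactF w (n+1) = (FactF w n).biUnion (fun u => (ExtF w u).image (fun c => u ++ [c])) := by
  ext z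
  simp only [Finset.mem_biUnion, Finset.mem_image]
  constructor
  · intro hz
    rcases mem_FactF.mp hz with ⟨hn, hlen, hinf⟩
    have hne : z ≠ [] := by intro h; subst h; simp at hlen
    refine ⟨z.dropLast, mem_FactF.mpr ⟨by omega, by rw [List.length_dropLast]; omega, ?_⟩,
      z.getLast hne, mem_ExtF.mpr ?_, List.dropLast_append_getLast hne⟩
    · exact (List.dropLast_prefix z).isInfix.trans hinf
    · rw [List.dropLast_append_getLast hne]; exact hinf
  · rintro ⟨u, hu, c, hc, rfl⟩
    rcases mem_FactF.mp hu with ⟨hn, hlen, -⟩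
    have hinf := mem_ExtF.mp hc
    exact mem_FactF.mpr ⟨by have := hinf.length_le; simp at this; omega, by simp [hlen], hinf⟩

theorem card_factF_succ (w : Word) (n : ℕ) :
    (FactF w (n+1)).card = ∑ u ∈ FactF w n, (ExtF w u).card := by
  rw [factF_succ, Finset.card_biUnion]
  · apply Finset.sum_congr rfl
    intro u hu
    apply Finset.card_image_of_injective
    intro c d h
    simpa using h
  · intro u1 h1 u2 h2 hne
    simp only [Finset.disjoint_left, Finset.mem_image]
    rintro z ⟨c1, -, rfl⟩ ⟨c2, -, heq⟩
    have l1 := (mem_FactF.mp h1).2.1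
    have l2 := (mem_FactF.mp h2).2.1
    have := List.append_inj_left heq.symm (by omega)
    exact hne this

/-- number of right special factors of length `n`. -/
noncomputable def cRS (w : Word) (n : ℕ) : ℕ :=
  ((FactF w n).filter (fun u => IsRightSpecial u w)).card

theorem sum_boole_nat (s : Finset Word) (p : Word → Prop) [DecidablePred p] :
    (∑ u ∈ s, if p u then 1 else 0) = (s.filter p).card := by
  rw [Finset.card_eq_sum_ones, Finset.sum_filter]

/-- the key local identity. -/
theorem step_identity (w : Word) (n : ℕ) :
    (FactF w (n+1)).card + (if Kp w ≤ n ∧ n ≤ w.length then 1 else 0)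
      = (FactF w n).card + cRS w n := by
  by_cases hn : n ≤ w.length
  swap
  · rw [FactF_overlong w (by omega : w.length < n), FactF_overlong w (by omega : w.length < n+1)]
    have : cRS w n = 0 := by
      unfold cRS
      rw [FactF_overlong w (by omega : w.length < n)]
      rfl
    rw [this, if_neg (by omega : ¬ (Kp w ≤ n ∧ n ≤ w.length))]
  · rw [card_factF_succ]
    have key : ∀ u ∈ FactF w n,
        (ExtF w u).card + (if (u <:+ w ∧ OccursOnce u w) then 1 else 0)
          = 1 + (if IsRightSpecial u w then 1 else 0) := by
      intro u hu
      exact ext_card (mem_FactF.mp hu).2.2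
    have hsum := Finset.sum_congr rfl key
    rw [Finset.sum_add_distrib, Finset.sum_add_distrib] at hsum
    rw [sum_boole_nat, sum_boole_nat] at hsum
    have hdead : ((FactF w n).filter (fun u => u <:+ w ∧ OccursOnce u w)).card
        = (if Kp w ≤ n ∧ n ≤ w.length then 1 else 0) := by
      by_cases hk : Kp w ≤ n
      · rw [if_pos ⟨hk, hn⟩]
        have : (FactF w n).filter (fun u => u <:+ w ∧ OccursOnce u w)
            = {w.drop (w.length - n)} := by
          ext u
          simp only [Finset.mem_filter, Finset.mem_singleton]
          constructor
          · rintro ⟨hu, hsuf, -⟩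
            rw [suffix_eq_drop hsuf, (mem_FactF.mp hu).2.1]
          · rintro rfl
            have hlen : (w.drop (w.length - n)).length = n := by simp; omega
            exact ⟨mem_FactF.mpr ⟨hn, hlen, (List.drop_suffix _ _).isInfix⟩,
              List.drop_suffix _ _, (suffix_once_iff hn).mpr hk⟩
        rw [this]; rfl
      · rw [if_neg (by tauto)]
        rw [Finset.card_eq_zero]
        apply Finset.eq_empty_of_forall_notMem
        rintro u hu
        rw [Finset.mem_filter] at hu
        rcases hu with ⟨hu, hsuf, honce⟩
        apply hk
        have hlen := (mem_FactF.mp hu).2.1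
        have := suffix_eq_drop hsuf
        rw [hlen] at this
        rw [← suffix_once_iff hn]
        rwa [← this]
    rw [hdead] at hsum
    rw [Finset.sum_const, smul_eq_mul, mul_one] at hsum
    unfold cRS
    omega

theorem sum_ite_le (N k : ℕ) : (∑ n ∈ Finset.range N, if k ≤ n then 1 else 0) = N - k := by
  induction N with
  | zero => simp
  | succ m ih =>
    rw [Finset.sum_range_succ, ih]
    by_cases h : k ≤ m
    · rw [if_pos h]; omega
    · rw [if_neg h]; omega

/-- the global counting identity. -/
theorem sum_cRS (w : Word) :
    (∑ n ∈ Finset.range (w.length + 1), cRS w n) + Kp w = w.length := by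
  have main : ∀ m, m ≤ w.length + 1 →
      (FactF w m).card + (∑ n ∈ Finset.range m, if Kp w ≤ n ∧ n ≤ w.length then 1 else 0)
        = (FactF w 0).card + ∑ n ∈ Finset.range m, cRS w n := by
    intro m hm
    induction m with
    | zero => simp
    | succ k ih =>
      have hk := ih (by omega)
      rw [Finset.sum_range_succ, Finset.sum_range_succ, ← Nat.add_assoc]
      have := step_identity w k
      omega
  have h := main (w.length + 1) (le_refl _)
  rw [FactF_overlong w (by omega), FactF_zero] at h
  simp only [Finset.card_empty, Finset.card_singleton] at h
  have hite : (∑ n ∈ Finset.range (w.length + 1), if Kp w ≤ n ∧ n ≤ w.length then 1 else 0)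
      = (∑ n ∈ Finset.range (w.length + 1), if Kp w ≤ n then 1 else 0) := by
    apply Finset.sum_congr rfl
    intro n hn
    rw [Finset.mem_range] at hn
    by_cases h1 : Kp w ≤ n
    · rw [if_pos ⟨h1, by omega⟩, if_pos h1]
    · rw [if_neg (by tauto), if_neg h1]
  rw [hite, sum_ite_le] at h
  have := Kp_le_length w
  omega

/-! ### trapezoidal ↔ unique right special factor per length -/

/-- unique right-special factor of each length. -/
def RSU (w : Word) : Prop :=
  ∀ u1 u2 : Word, IsRightSpecial u1 w → IsRightSpecial u2 w → u1.length = u2.length → u1 = u2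

def LSU (w : Word) : Prop :=
  ∀ u1 u2 : Word, IsLeftSpecial u1 w → IsLeftSpecial u2 w → u1.length = u2.length → u1 = u2

theorem rs_mem_filter {w u : Word} (hu : IsRightSpecial u w) :
    u ∈ (FactF w u.length).filter (fun z => IsRightSpecial z w) := by
  have hlen := hu.1.length_le
  simp only [List.length_append, List.length_singleton] at hlen
  refine Finset.mem_filter.mpr ⟨mem_FactF.mpr ⟨by omega, rfl, ?_⟩, hu⟩
  exact (List.prefix_append u [a]).isInfix.trans hu.1

theorem one_le_cRS {w : Word} {n : ℕ} (h : n < Rp w) : 1 ≤ cRS w n := by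
  rcases exists_rs_of_lt h with ⟨u, hlen, hu⟩
  have := rs_mem_filter hu
  rw [hlen] at this
  exact Finset.card_pos.mpr ⟨u, this⟩

theorem cRS_eq_zero_of_le {w : Word} {n : ℕ} (h : Rp w ≤ n) : cRS w n = 0 := by
  rw [cRS, Finset.card_eq_zero]
  apply Finset.eq_empty_of_forall_notMem
  intro u hu
  rw [Finset.mem_filter] at hu
  exact (Rp_le_iff.mp h) u (mem_FactF.mp hu.1).2.1 hu.2

theorem sum_cRS_range (w : Word) :
    ∑ n ∈ Finset.range (Rp w), cRS w n = ∑ n ∈ Finset.range (w.length + 1), cRS w n := by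
  apply Finset.sum_subset
  · exact Finset.range_subset_range.mpr (by have := Rp_le_length w; omega)
  · intro n hn hnot
    rw [Finset.mem_range] at hn
    rw [Finset.mem_range] at hnot
    exact cRS_eq_zero_of_le (by omega)

theorem trap_iff_rsu (w : Word) : IsTrapezoidal w ↔ RSU w := by
  constructor
  · intro htrap
    have hsum : ∑ n ∈ Finset.range (Rp w), cRS w n = Rp w := by
      have h1 := sum_cRS w
      rw [← sum_cRS_range w] at h1
      rw [IsTrapezoidal] at htrap
      omega
    intro u1 u2 h1 h2 hlen
    by_contra hne
    set n := u1.length with hn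
    have hnR : n < Rp w := by
      rcases Nat.lt_or_ge n (Rp w) with h | h
      · exact h
      · exact absurd h1 (Rp_le_iff.mp h u1 rfl)
    have h2le : 2 ≤ cRS w n := by
      have hsub : ({u1, u2} : Finset Word) ⊆ (FactF w n).filter (fun z => IsRightSpecial z w) := by
        intro z hz
        rcases Finset.mem_insert.mp hz with rfl | hz
        · exact rs_mem_filter h1
        · rw [Finset.mem_singleton] at hz; subst hz
          have := rs_mem_filter h2
          rwa [← hlen] at this
      have := Finset.card_le_card hsub
      rwa [Finset.card_insert_of_notMem (by simpa using hne), Finset.card_singleton] at this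
    have : ∑ n ∈ Finset.range (Rp w), (1:ℕ) < ∑ n ∈ Finset.range (Rp w), cRS w n := by
      apply Finset.sum_lt_sum
      · intro i hi
        exact one_le_cRS (Finset.mem_range.mp hi)
      · exact ⟨n, Finset.mem_range.mpr hnR, by omega⟩
    simp at this
    omega
  · intro hrsu
    have hle1 : ∀ n, cRS w n ≤ 1 := by
      intro n
      apply Finset.card_le_one.mpr
      intro z1 hz1 z2 hz2
      rw [Finset.mem_filter] at hz1 hz2
      exact hrsu z1 z2 hz1.2 hz2.2 (by
        rw [(mem_FactF.mp hz1.1).2.1, (mem_FactF.mp hz2.1).2.1])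
    have hub : ∑ n ∈ Finset.range (Rp w), cRS w n ≤ Rp w := by
      calc ∑ n ∈ Finset.range (Rp w), cRS w n ≤ ∑ n ∈ Finset.range (Rp w), 1 :=
        Finset.sum_le_sum (fun i _ => hle1 i)
      _ = Rp w := by simp
    have hlb : Rp w ≤ ∑ n ∈ Finset.range (Rp w), cRS w n := by
      calc Rp w = ∑ n ∈ Finset.range (Rp w), 1 := by simp
      _ ≤ ∑ n ∈ Finset.range (Rp w), cRS w n :=
        Finset.sum_le_sum (fun i hi => one_le_cRS (Finset.mem_range.mp hi))
    have h1 := sum_cRS w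
    rw [← sum_cRS_range w] at h1
    rw [IsTrapezoidal]
    omega

/-! ### unique RS implies unique LS -/

theorem ls_dropLast {w u : Word} (hu : IsLeftSpecial u w) (hne : u ≠ []) :
    IsLeftSpecial u.dropLast w := by
  refine ⟨?_, ?_⟩
  · refine List.IsInfix.trans ?_ hu.1
    exact (show ([a] ++ u.dropLast) <+: ([a] ++ u) from
      ⟨[u.getLast hne], by rw [List.append_assoc, List.dropLast_append_getLast hne]⟩).isInfix
  · refine List.IsInfix.trans ?_ hu.2
    exact (show ([b] ++ u.dropLast) <+: ([b] ++ u) from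
      ⟨[u.getLast hne], by rw [List.append_assoc, List.dropLast_append_getLast hne]⟩).isInfix

theorem rsu_lsu {w : Word} (hrsu : RSU w) : LSU w := by
  have main : ∀ n : ℕ, ∀ u1 u2 : Word, IsLeftSpecial u1 w → IsLeftSpecial u2 w →
      u1.length = n → u2.length = n → u1 = u2 := by
    intro n
    induction n with
    | zero =>
      intro u1 u2 _ _ h1 h2
      rw [List.length_eq_zero_iff] at h1 h2
      rw [h1, h2]
    | succ m ih =>
      intro u1 u2 hls1 hls2 h1 h2
      by_contra hne
      have hne1 : u1 ≠ [] := by intro h; subst h; simp at h1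
      have hne2 : u2 ≠ [] := by intro h; subst h; simp at h2
      have hdl : u1.dropLast = u2.dropLast := by
        apply ih _ _ (ls_dropLast hls1 hne1) (ls_dropLast hls2 hne2) <;>
          rw [List.length_dropLast] <;> omega
      obtain ⟨c, hu1⟩ : ∃ c, u1 = u1.dropLast ++ [c] :=
        ⟨_, (List.dropLast_append_getLast hne1).symm⟩
      obtain ⟨d, hu2⟩ : ∃ d, u2 = u1.dropLast ++ [d] :=
        ⟨_, by rw [hdl]; exact (List.dropLast_append_getLast hne2).symm⟩
      have hcd : c ≠ d := by
        intro h
        exact hne (hu1.trans (h ▸ hu2.symm))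
      have hac : ([a] ++ u1.dropLast) ++ [c] <:+: w := by
        rw [List.append_assoc, ← hu1]; exact hls1.1
      have hbc : ([b] ++ u1.dropLast) ++ [c] <:+: w := by
        rw [List.append_assoc, ← hu1]; exact hls1.2
      have had : ([a] ++ u1.dropLast) ++ [d] <:+: w := by
        rw [List.append_assoc, ← hu2]; exact hls2.1
      have hbd : ([b] ++ u1.dropLast) ++ [d] <:+: w := by
        rw [List.append_assoc, ← hu2]; exact hls2.2
      have hkey : IsRightSpecial ([a] ++ u1.dropLast) w ∧ IsRightSpecial ([b] ++ u1.dropLast) w := by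
        rcases c with - | - <;> rcases d with - | -
        · exact absurd rfl hcd
        · exact ⟨⟨hac, had⟩, ⟨hbc, hbd⟩⟩
        · exact ⟨⟨had, hac⟩, ⟨hbd, hbc⟩⟩
        · exact absurd rfl hcd
      have := hrsu ([a] ++ u1.dropLast) ([b] ++ u1.dropLast) hkey.1 hkey.2 (by simp)
      simp at this
  intro u1 u2 h1 h2 hlen
  exact main u1.length u1 u2 h1 h2 rfl hlen.symm

/-! ### reversal -/

theorem occursAt_reverse {u w : Word} {i : ℕ} (h : OccursAt u w i) :
    OccursAt u.reverse w.reverse (w.length - u.length - i) := by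
  rcases occursAt_iff.mp h with ⟨t, s, hlen, rfl⟩
  refine occursAt_iff.mpr ⟨s.reverse, t.reverse, ?_, ?_⟩
  · simp; omega
  · simp [List.reverse_append]

theorem occursOnce_reverse {u w : Word} (h : OccursOnce u w) :
    OccursOnce u.reverse w.reverse := by
  rcases h with ⟨i, hi, huniq⟩
  refine ⟨w.length - u.length - i, occursAt_reverse hi, ?_⟩
  intro j hj
  have hj' := occursAt_reverse hj
  simp only [List.reverse_reverse, List.length_reverse] at hj'
  have hiq := huniq _ hj'
  have hb : j + u.length ≤ w.length := by
    rcases hj with ⟨h1, -⟩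
    simp at h1
    omega
  have hb2 : i + u.length ≤ w.length := by rcases hi with ⟨h1, -⟩; omega
  omega

theorem Kp_reverse (w : Word) : Kp (w.reverse) = Hp w := by
  unfold Kp Hp
  congr 1
  ext n
  constructor
  · rintro ⟨s, hs, rfl, honce⟩
    refine ⟨s.reverse, ?_, by simp, ?_⟩
    · have := List.reverse_prefix.mpr hs
      simpa using this
    · have := occursOnce_reverse honce
      simpa using this
  · rintro ⟨p, hp, rfl, honce⟩
    refine ⟨p.reverse, ?_, by simp, ?_⟩
    · exact List.reverse_suffix.mpr hp
    · exact occursOnce_reverse honce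

theorem Rp_reverse (w : Word) : Rp (w.reverse) = Lp w := by
  unfold Rp Lp
  congr 1
  ext n
  constructor
  · intro h u hlen hls
    apply h u.reverse (by simpa using hlen)
    constructor
    · have : ([a] ++ u).reverse <:+: w.reverse := List.reverse_infix.mpr hls.1
      simpa using this
    · have : ([b] ++ u).reverse <:+: w.reverse := List.reverse_infix.mpr hls.2
      simpa using this
  · intro h u hlen hrs
    apply h u.reverse (by simpa using hlen)
    constructor
    · have : (u ++ [a]).reverse <:+: w.reverse.reverse := List.reverse_infix.mpr hrs.1
      simpa using this
    · have : (u ++ [b]).reverse <:+: w.reverse.reverse := List.reverse_infix.mpr hrs.2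
      simpa using this

theorem lsu_rsu_reverse {w : Word} (h : LSU w) : RSU w.reverse := by
  intro u1 u2 h1 h2 hlen
  have key : ∀ u : Word, IsRightSpecial u w.reverse → IsLeftSpecial u.reverse w := by
    intro u hu
    constructor
    · have : (u ++ [a]).reverse <:+: w.reverse.reverse := List.reverse_infix.mpr hu.1
      simpa using this
    · have : (u ++ [b]).reverse <:+: w.reverse.reverse := List.reverse_infix.mpr hu.2
      simpa using this
  have := h u1.reverse u2.reverse (key u1 h1) (key u2 h2) (by simpa using hlen)
  have := congrArg List.reverse this
  simpa using this

/-- the central structural theorem: a trapezoidal word also satisfies `|w| = H + L`. -/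
theorem length_HL {w : Word} (htrap : IsTrapezoidal w) : w.length = Hp w + Lp w := by
  have h1 : RSU w.reverse := lsu_rsu_reverse (rsu_lsu ((trap_iff_rsu w).mp htrap))
  have h2 : IsTrapezoidal w.reverse := (trap_iff_rsu w.reverse).mpr h1
  rw [IsTrapezoidal] at h2
  rw [Kp_reverse, Rp_reverse, List.length_reverse] at h2
  exact h2

theorem trap_prefix {w : Word} {x : AB} (h : IsTrapezoidal (w ++ [x])) : IsTrapezoidal w := by
  rw [trap_iff_rsu] at h ⊢
  intro u1 u2 h1 h2 hlen
  have key : ∀ u : Word, IsRightSpecial u w → IsRightSpecial u (w ++ [x]) := by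
    intro u hu
    exact ⟨hu.1.trans (List.prefix_append w [x]).isInfix,
      hu.2.trans (List.prefix_append w [x]).isInfix⟩
  exact h u1 u2 (key u1 h1) (key u2 h2) hlen

/-! ### behaviour of `Hp` under extension, and closedness -/

theorem occursAt_of_prefix {u p w : Word} {i : ℕ} (h : OccursAt u w i) (hp : p <+: u) :
    OccursAt p w i := by
  rcases hp with ⟨r, rfl⟩
  exact occursAt_of_occursAt_append h

theorem exists_second_occ {u w : Word} (h0 : OccursAt u w 0) (h : ¬ OccursOnce u w) :
    ∃ j, j ≠ 0 ∧ OccursAt u w j := by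
  by_contra hcon
  push_neg at hcon
  exact h ⟨0, h0, fun j hj => by
    by_contra hne
    exact hcon j hne hj⟩

/-- `Hp (w ++ [x]) ≤ Hp w + 1`. -/
theorem Hv_le (w : Word) (x : AB) : Hp (w ++ [x]) ≤ Hp w + 1 := by
  set v := w ++ [x] with hv
  have hHw := Hp_le_length w
  have hvlen : v.length = w.length + 1 := by simp [hv]
  have honce_w : OccursOnce (w.take (Hp w)) w := (prefix_once_iff hHw).mpr le_rfl
  have htake : v.take (Hp w) = w.take (Hp w) := by
    rw [hv]; exact List.take_append_of_le_length hHw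
  have hlen' : (v.take (Hp w + 1)).length = Hp w + 1 := by simp [hvlen]; omega
  have honce : OccursOnce (v.take (Hp w + 1)) v := by
    refine ⟨0, occursAt_take, ?_⟩
    intro j hj
    obtain ⟨c, hsucc⟩ : ∃ c, v.take (Hp w + 1) = v.take (Hp w) ++ [c] := by
      refine ⟨v[Hp w]'(by omega), ?_⟩
      conv_lhs => rw [List.take_succ]
      rw [List.getElem?_eq_getElem (show Hp w < v.length by omega)]
      rfl
    rw [hsucc] at hj
    have hj2 := occursAt_of_occursAt_append hj
    have hjb : j + (Hp w) + 1 ≤ v.length := by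
      rcases hj with ⟨h1, -⟩
      simp at h1
      omega
    rw [htake] at hj2
    have hj3 : OccursAt (w.take (Hp w)) w j := by
      rw [hv] at hj2
      exact occursAt_restrict hj2 (by simp [hvlen] at hjb ⊢; omega)
    exact honce_w.unique hj3 occursAt_take
  refine Nat.sInf_le ⟨v.take (Hp w + 1), List.take_prefix _ _, hlen', honce⟩

/-- `Hp w ≤ Hp (w ++ [x])`. -/
theorem Hw_le (w : Word) (x : AB) : Hp w ≤ Hp (w ++ [x]) := by
  set v := w ++ [x] with hv
  rcases Hp_mem v with ⟨p, hp, hlen, honce⟩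
  rw [← hlen]
  by_contra hlt
  push_neg at hlt
  have hple : p.length ≤ w.length := by have := Hp_le_length w; omega
  have hptake : p = w.take p.length := by
    have h1 := prefix_eq_take hp
    rw [hv, List.take_append_of_le_length hple] at h1
    exact h1
  have hnotonce : ¬ OccursOnce (w.take p.length) w := by
    intro h
    have := (prefix_once_iff hple).mp h
    omega
  rcases exists_second_occ occursAt_take hnotonce with ⟨j, hjne, hj⟩
  have h0 : OccursAt p v 0 := occursAt_zero_iff.mpr hp
  have hjv : OccursAt p v j := by
    rw [hptake, hv]
    exact occursAt_append_left hj
  exact hjne (honce.unique hjv h0)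

/-- if `w ++ [x]` is closed then `Hp w + 1 ≤ Hp (w ++ [x])`. -/
theorem closed_H (w : Word) (x : AB) (hc : IsClosedWord (w ++ [x])) :
    Hp w + 1 ≤ Hp (w ++ [x]) := by
  set v := w ++ [x] with hv
  have hvlen : v.length = w.length + 1 := by simp [hv]
  rcases hc with ⟨-, u, hupre, hult, husuf, hocc⟩
  -- step 1 : Hp w ≤ u.length
  have hstep1 : Hp w ≤ u.length := by
    by_contra hlt
    push_neg at hlt
    have hule : u.length ≤ w.length := by omega
    have hutake : u = w.take u.length := by
      have h1 := prefix_eq_take hupre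
      rw [hv, List.take_append_of_le_length hule] at h1
      exact h1
    have hnotonce : ¬ OccursOnce (w.take u.length) w := by
      intro h
      have := (prefix_once_iff hule).mp h
      omega
    rcases exists_second_occ occursAt_take hnotonce with ⟨j, hjne, hj⟩
    have hjv : OccursAt u v j := by
      rw [hutake, hv]; exact occursAt_append_left hj
    rcases hocc j hjv with rfl | hend
    · exact hjne rfl
    · have hb := hj.1
      rw [List.length_take, min_eq_left hule] at hb
      have hulen : u.length ≤ w.length := hule
      have : (w.take u.length).length = u.length := by
        rw [List.length_take, min_eq_left hule]
      rw [hutake, this] at hend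
      omega
  -- step 2 : every prefix of `v` of length ≤ Hp w occurs at least twice in v
  rcases Hp_mem v with ⟨p, hp, hlen, honce⟩
  rw [← hlen]
  by_contra hcon
  push_neg at hcon
  have hplen : p.length ≤ u.length := by omega
  have hptake := prefix_eq_take hp
  have hpu : p <+: u := List.prefix_of_prefix_length_le hp hupre hplen
  have husufocc : OccursAt u v (v.length - u.length) := by
    have := occursAt_suffix (show u.length ≤ v.length from husuf.length_le)
    rwa [← suffix_eq_drop husuf] at this
  have hpocc : OccursAt p v (v.length - u.length) := occursAt_of_prefix husufocc hpu
  have h0 : OccursAt p v 0 := occursAt_zero_iff.mpr hp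
  have := honce.unique hpocc h0
  omega

/-- if `w ++ [x]` is not closed then `Hp (w ++ [x]) ≤ Hp w`. -/
theorem open_H (w : Word) (x : AB) (hnc : ¬ IsClosedWord (w ++ [x])) :
    Hp (w ++ [x]) ≤ Hp w := by
  set v := w ++ [x] with hv
  have hvlen : v.length = w.length + 1 := by simp [hv]
  by_contra hcon
  push_neg at hcon
  apply hnc
  have hHw := Hp_le_length w
  set p := v.take (Hp w) with hptake
  have hplen : p.length = Hp w := by simp [hptake]; omega
  have hpw : p = w.take (Hp w) := by
    rw [hptake, hv]; exact List.take_append_of_le_length hHw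
  have honce_w : OccursOnce (w.take (Hp w)) w := (prefix_once_iff hHw).mpr le_rfl
  have hnotonce : ¬ OccursOnce p v := by
    intro h
    have : Hp v ≤ Hp w := Nat.sInf_le ⟨p, List.take_prefix _ _, hplen, h⟩
    omega
  rcases exists_second_occ occursAt_take hnotonce with ⟨j, hjne, hj⟩
  have hjend : j + Hp w = v.length := by
    rcases Nat.lt_or_ge (j + Hp w) v.length with hlt | hge
    · exfalso
      have hjw : OccursAt p w j := by
        rw [hpw]
        apply occursAt_restrict (show OccursAt (w.take (Hp w)) (w ++ [x]) j from ?_)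
        · have hb : j + p.length ≤ v.length := hj.1
          rw [hplen] at hb
          simp at hb ⊢
          omega
        · rw [← hpw, ← hv]; exact hj
      apply hjne
      rw [hpw] at hjw
      exact honce_w.unique hjw occursAt_take
    · have hb : j + p.length ≤ v.length := hj.1
      rw [hplen] at hb
      omega
  refine ⟨by simp [hv], p, List.take_prefix _ _, by omega, ?_, ?_⟩
  · apply occursAt_suffix_of_end hj
    rw [hplen]; exact hjend
  · intro k hk
    rcases Nat.lt_or_ge (k + p.length) v.length with hlt | hge
    · left
      have hkw : OccursAt p w k := by
        rw [hpw]
        apply occursAt_restrict (show OccursAt (w.take (Hp w)) (w ++ [x]) k from ?_)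
        · simp [hplen] at hlt ⊢; omega
        · rw [← hpw, ← hv]; exact hk
      rw [hpw] at hkw
      exact honce_w.unique hkw occursAt_take
    · right
      have hb : k + p.length ≤ v.length := hk.1
      omega

end LExt
end AuxProof

/-- behavior of `L` under right extension of trapezoidal words. -/
theorem L_extension (w : Word) (x : AB) (htrap : IsTrapezoidal (w ++ [x])) :
    (IsClosedWord (w ++ [x]) → Lp (w ++ [x]) = Lp w) ∧
    (IsOpenWord (w ++ [x]) → Lp (w ++ [x]) = Lp w + 1) := by
  have htrapw : IsTrapezoidal w := LExt.trap_prefix htrap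
  have hHLv := LExt.length_HL htrap
  have hHLw := LExt.length_HL htrapw
  have hvlen : (w ++ [x]).length = w.length + 1 := by simp
  have h1 := LExt.Hv_le w x
  have h2 := LExt.Hw_le w x
  constructor
  · intro hc
    have h3 := LExt.closed_H w x hc
    omega
  · rintro ⟨-, hnc⟩
    have h3 := LExt.open_H w x hnc
    omega
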